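/- arXiv:1611.01609 — 2 statements merged into one kernel-verified Lean document; each statement's English description precedes it below -/
import Mathlib

section
/- Let G be a finite simple graph and let S ⊊ V(G) be an anchor of G that is maximal, i.e., no set S′ with S ⊊ S′ ⊊ V(G) is an anchor of G. Then the shadow graph established on S is balanced; precisely: for every nonempty proper subset A ⊊ V(G)∖S there exist a subset B ⊆ V(G)∖S with B ≠ A, an automorphism α of the induced subgraph G[S], and a bijection g : A → B such that (i) for every a ∈ A, α maps N_G(a) ∩ S onto N_G(g(a)) ∩ S, and (ii) for all a, a′ ∈ A, a and a′ are adjacent in G if and only if g(a) and g(a′) are adjacent in G. -/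
/-!
Let `A ⊆ V(G) ∖ S` be nonempty and proper. By maximality `S ∪ A` is not an anchor, so some
embedding `f` of `G[S ∪ A]` into `G` has range different from `S ∪ A`. Restricted to `S`, `f` is
a copy of `G[S]`, hence has range `S` because `S` is an anchor; so it is an automorphism `α` of
`G[S]`. The image `B = f(A)` is then disjoint from `S`, and `B ≠ A` because `S ∪ B = range f`.
The bijection `f : A → B` together with `α` is the required isomorphic copy.
-/

/-- An *anchor* of `G` is a proper subset `S ⊊ V(G)` such that the induced
subgraph `G[S]` occurs exactly once in `G`: every `T` with `G[T] ≅ G[S]`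
satisfies `T = S`. -/
def IsAnchor {V : Type} (G : SimpleGraph V) (S : Set V) : Prop :=
  S ≠ Set.univ ∧ ∀ T : Set V, Nonempty (G.induce T ≃g G.induce S) → T = S

open Set

theorem Set.range_eq_range_inclusion_union {α β : Type*} {s t : Set α} (f : ↥(s ∪ t) → β) :
    range f =
      range (f ∘ inclusion subset_union_left) ∪ range (f ∘ inclusion subset_union_right) := by
  ext y
  constructor
  · rintro ⟨⟨v, hv | hv⟩, rfl⟩
    exacts [Or.inl ⟨⟨v, hv⟩, rfl⟩, Or.inr ⟨⟨v, hv⟩, rfl⟩]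
  · rintro (⟨x, rfl⟩ | ⟨x, rfl⟩) <;> exact mem_range_self _

theorem Function.Injective.disjoint_range_inclusion {α β : Type*} {s t : Set α}
    {f : ↥(s ∪ t) → β} (hf : Function.Injective f) (hst : Disjoint s t) :
    Disjoint (range (f ∘ inclusion subset_union_left))
      (range (f ∘ inclusion subset_union_right)) := by
  rw [Set.disjoint_iff]
  rintro _ ⟨⟨x, rfl⟩, ⟨y, hy⟩⟩
  exact hst.ne_of_mem x.2 y.2 (congrArg Subtype.val (hf hy)).symm

namespace SimpleGraph

variable {V : Type} {G : SimpleGraph V} {S : Set V}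

noncomputable def Embedding.autInduceOfRangeEq (f : G.induce S ↪g G) (hf : range f = S) :
    G.induce S ≃g G.induce S where
  toEquiv := (Equiv.ofInjective f f.injective).trans (Equiv.setCongr hf)
  map_rel_iff' := f.map_adj_iff

end SimpleGraph

section IsAnchor

variable {V : Type} {G : SimpleGraph V} {S : Set V}

theorem IsAnchor.range_eq (hS : IsAnchor G S) (f : G.induce S ↪g G) : range f = S :=
  hS.2 _ ⟨f.isoInduceRange.symm⟩

theorem exists_embedding_range_ne_of_not_isAnchor (hS : S ≠ univ) (h : ¬ IsAnchor G S) :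
    ∃ f : G.induce S ↪g G, range f ≠ S := by
  obtain ⟨T, ⟨e⟩, hT⟩ : ∃ T, Nonempty (G.induce T ≃g G.induce S) ∧ T ≠ S := by
    simpa [IsAnchor, hS] using h
  refine ⟨(SimpleGraph.Embedding.induce T).comp e.symm.toEmbedding, ?_⟩
  convert hT
  simp only [SimpleGraph.Embedding.coe_comp, range_comp, RelIso.coe_toRelEmbedding,
    e.symm.surjective.range_eq, image_univ]
  exact Subtype.range_coe

end IsAnchor

theorem stmt_2_general {V : Type} (G : SimpleGraph V) (S : Set V)
    (hanch : IsAnchor G S)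
    (hmax : ∀ S' : Set V, S ⊂ S' → S' ≠ Set.univ → ¬ IsAnchor G S') :
    ∀ A : Set V, A ⊆ Sᶜ → A.Nonempty → A ≠ Sᶜ →
      ∃ B : Set V, B ⊆ Sᶜ ∧ B ≠ A ∧
        ∃ (α : G.induce S ≃g G.induce S) (g : ↥A ≃ ↥B),
          (∀ (a : ↥A) (x : ↥S),
            G.Adj (a : V) (x : V) ↔ G.Adj ((g a : V)) ((α x : V))) ∧
          (∀ a a' : ↥A,
            G.Adj (a : V) (a' : V) ↔ G.Adj ((g a : V)) ((g a' : V))) := by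
  intro A hA ⟨a₀, ha₀⟩ hAS
  have hS_ssub : S ⊂ S ∪ A := ssubset_union_left_iff.2 fun h ↦ hA ha₀ (h ha₀)
  have hSA_ne : S ∪ A ≠ univ := fun h ↦ hAS (hA.antisymm (compl_subset_iff_union.2 h))
  obtain ⟨f, hf⟩ := exists_embedding_range_ne_of_not_isAnchor hSA_ne (hmax _ hS_ssub hSA_ne)
  set fS := f.comp (G.induceHomOfLE subset_union_left)
  set fA := f.comp (G.induceHomOfLE subset_union_right)
  have hfS : range fS = S := hanch.range_eq fS
  have hdisj : Disjoint S (range fA) :=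
    hfS ▸ f.injective.disjoint_range_inclusion (disjoint_compl_right.mono_right hA)
  refine ⟨range fA, hdisj.subset_compl_left, fun hB ↦ hf ?_,
    fS.autInduceOfRangeEq hfS, Equiv.ofInjective fA fA.injective,
    fun a x ↦ (f.map_adj_iff (v := inclusion subset_union_right a)
      (w := inclusion subset_union_left x)).symm,
    fun a a' ↦ fA.map_adj_iff.symm⟩
  calc range f = range fS ∪ range fA := range_eq_range_inclusion_union f
    _ = S ∪ A := by rw [hfS, hB]

/-- If `S` is a maximal anchor of `G`, then the shadow graph
established on `S` is balanced: every nonempty proper subset `A ⊊ V(G)∖S` has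
an "isomorphic copy" `B ≠ A` inside `V(G)∖S`, i.e. there are an automorphism
`α` of `G[S]` and a bijection `g : A → B` such that `α` maps `N_G(a) ∩ S` onto
`N_G(g a) ∩ S` for each `a ∈ A`, and `g` preserves adjacency within `A`. -/
theorem stmt_2 {V : Type} [Fintype V] (G : SimpleGraph V) (S : Set V)
    (hanch : IsAnchor G S)
    (hmax : ∀ S' : Set V, S ⊂ S' → S' ≠ Set.univ → ¬ IsAnchor G S') :
    ∀ A : Set V, A ⊆ Sᶜ → A.Nonempty → A ≠ Sᶜ →
      ∃ B : Set V, B ⊆ Sᶜ ∧ B ≠ A ∧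
        ∃ (α : G.induce S ≃g G.induce S) (g : ↥A ≃ ↥B),
          (∀ (a : ↥A) (x : ↥S),
            G.Adj (a : V) (x : V) ↔ G.Adj ((g a : V)) ((α x : V))) ∧
          (∀ a a' : ↥A,
            G.Adj (a : V) (a' : V) ↔ G.Adj ((g a : V)) ((g a' : V))) :=
  stmt_2_general G S hanch hmax
end

section
/- Let G be a finite simple graph on n ≥ 3 vertices. If there exist distinct vertices v and u of G such that S = V(G)∖{v,u} is an anchor of G and the induced subgraph G[S] is asymmetric, then G is reconstructible. -/
/-- Two graphs are *hypomorphic* if there is a bijection `σ` between their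
vertex sets such that `G − v ≅ G′ − σ(v)` for every vertex `v`. -/
def Hypomorphic {V W : Type} [Fintype V] [Fintype W]
    (G : SimpleGraph V) (G' : SimpleGraph W) : Prop :=
  ∃ σ : V ≃ W, ∀ v : V,
    Nonempty (G.induce ({v}ᶜ : Set V) ≃g G'.induce ({σ v}ᶜ : Set W))

/-- A graph is *reconstructible* if every graph hypomorphic to it is
isomorphic to it. -/
def Reconstructible {V : Type} [Fintype V] (G : SimpleGraph V) : Prop :=
  ∀ (W : Type) [Fintype W] (G' : SimpleGraph W), Hypomorphic G G' → Nonempty (G ≃g G')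


open SimpleGraph

/-- Transport an induced subgraph along a graph isomorphism. -/
noncomputable def isoInduce {α β : Type} {G₁ : SimpleGraph α} {G₂ : SimpleGraph β}
    (e : G₁ ≃g G₂) (A : Set α) : G₁.induce A ≃g G₂.induce (⇑e '' A) where
  toEquiv := e.toEquiv.image A
  map_rel_iff' := by
    intro a b
    simp only [Equiv.image, Equiv.coe_fn_mk, comap_adj, Function.Embedding.coe_subtype]
    exact e.map_rel_iff

/-- Induced subgraph of an induced subgraph. -/
noncomputable def induceInduce {α : Type} (G : SimpleGraph α) (A : Set α) (B : Set ↥A) :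
    (G.induce A).induce B ≃g G.induce (Subtype.val '' B) where
  toEquiv := Equiv.Set.image Subtype.val B Subtype.val_injective
  map_rel_iff' := by
    intro a b
    simp [Equiv.Set.image, Equiv.Set.imageOfInjOn]

/-- Push a subset `T ⊆ A` through an isomorphism of induced subgraphs. -/
noncomputable def push {α β : Type} {A : Set α} {B : Set β} {G₁ : SimpleGraph α}
    {G₂ : SimpleGraph β} (φ : G₁.induce A ≃g G₂.induce B) (T : Set α) : Set β :=
  Subtype.val '' (⇑φ '' (Subtype.val ⁻¹' T))

lemma push_subset {α β : Type} {A : Set α} {B : Set β} {G₁ : SimpleGraph α}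
    {G₂ : SimpleGraph β} (φ : G₁.induce A ≃g G₂.induce B) (T : Set α) :
    push φ T ⊆ B := by
  rintro x ⟨y, -, rfl⟩; exact y.2

noncomputable def pushIso {α β : Type} {A : Set α} {B : Set β} {G₁ : SimpleGraph α}
    {G₂ : SimpleGraph β} (φ : G₁.induce A ≃g G₂.induce B) (T : Set α) (hT : T ⊆ A) :
    G₁.induce T ≃g G₂.induce (push φ T) := by
  have h1 : Subtype.val '' (Subtype.val ⁻¹' T : Set ↥A) = T := by
    rw [Subtype.image_preimage_coe]; exact Set.inter_eq_self_of_subset_right hT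
  have chain : (G₁.induce A).induce (Subtype.val ⁻¹' T) ≃g G₂.induce (push φ T) :=
    (isoInduce φ _).trans (induceInduce G₂ B _)
  have chain2 := (induceInduce G₁ A (Subtype.val ⁻¹' T)).symm.trans chain
  rw [h1] at chain2
  exact chain2

lemma push_ncard {α β : Type} {A : Set α} {B : Set β} {G₁ : SimpleGraph α}
    {G₂ : SimpleGraph β} (φ : G₁.induce A ≃g G₂.induce B) (T : Set α) (hT : T ⊆ A) :
    (push φ T).ncard = T.ncard := by
  rw [← Nat.card_coe_set_eq, ← Nat.card_coe_set_eq]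
  exact (Nat.card_congr (pushIso φ T hT).toEquiv).symm

/-- Number of ordered adjacent pairs. -/
noncomputable def adjCount {α : Type} [Fintype α] (G : SimpleGraph α) : ℕ :=
  Nat.card {p : α × α // G.Adj p.1 p.2}

lemma adjCount_congr {α β : Type} [Fintype α] [Fintype β] {G : SimpleGraph α}
    {G' : SimpleGraph β} (e : G ≃g G') : adjCount G = adjCount G' :=
  Nat.card_congr <| Equiv.subtypeEquiv (e.toEquiv.prodCongr e.toEquiv)
    (fun p => by simpa using e.map_rel_iff.symm)

lemma adjCount_eq_filter {α : Type} [Fintype α] (G : SimpleGraph α)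
    [DecidableEq α] [DecidableRel G.Adj] :
    adjCount G = (Finset.univ.filter fun p : α × α => G.Adj p.1 p.2).card := by
  rw [adjCount, Nat.card_eq_fintype_card, Fintype.card_subtype]

lemma adjCount_card {α : Type} [Fintype α] [DecidableEq α] (G : SimpleGraph α) (x : α) :
    adjCount (G.induce ({x}ᶜ : Set α)) =
      Nat.card {p : α × α // G.Adj p.1 p.2 ∧ p.1 ≠ x ∧ p.2 ≠ x} := by
  apply Nat.card_congr
  refine Equiv.ofBijective (fun q => ⟨(q.1.1.1, q.1.2.1), ?_⟩) ⟨?_, ?_⟩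
  · obtain ⟨⟨a, b⟩, h⟩ := q
    simp only [comap_adj, Function.Embedding.coe_subtype] at h
    exact ⟨h, a.2, b.2⟩
  · rintro ⟨⟨a, b⟩, h⟩ ⟨⟨c, d⟩, h'⟩ hh
    simp only [Subtype.mk.injEq, Prod.mk.injEq] at hh
    simp [Subtype.ext hh.1, Subtype.ext hh.2]
  · rintro ⟨⟨a, b⟩, hadj, ha, hb⟩
    exact ⟨⟨(⟨a, ha⟩, ⟨b, hb⟩), by simpa using hadj⟩, rfl⟩

lemma kelly_sum {α : Type} [Fintype α] [DecidableEq α] (G : SimpleGraph α) :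
    ∑ x : α, adjCount (G.induce ({x}ᶜ : Set α)) = (Fintype.card α - 2) * adjCount G := by
  classical
  have hterm : ∀ x : α, adjCount (G.induce ({x}ᶜ : Set α)) =
      (Finset.univ.filter fun p : α × α => G.Adj p.1 p.2 ∧ p.1 ≠ x ∧ p.2 ≠ x).card := by
    intro x
    rw [adjCount_card, Nat.card_eq_fintype_card, Fintype.card_subtype]
  calc ∑ x : α, adjCount (G.induce ({x}ᶜ : Set α))
      = ∑ x : α, ∑ p : α × α, (if G.Adj p.1 p.2 ∧ p.1 ≠ x ∧ p.2 ≠ x then 1 else 0) := by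
        simp_rw [hterm, Finset.card_filter]
    _ = ∑ p : α × α, ∑ x : α, (if G.Adj p.1 p.2 ∧ p.1 ≠ x ∧ p.2 ≠ x then 1 else 0) :=
        Finset.sum_comm
    _ = ∑ p : α × α, (if G.Adj p.1 p.2 then (Fintype.card α - 2) else 0) := by
        refine Finset.sum_congr rfl fun p _ => ?_
        by_cases hp : G.Adj p.1 p.2
        · simp only [hp, true_and, if_true]
          have hne : p.1 ≠ p.2 := hp.ne
          have : ∑ x : α, (if p.1 ≠ x ∧ p.2 ≠ x then 1 else 0)
              = (Finset.univ.filter fun x : α => p.1 ≠ x ∧ p.2 ≠ x).card := by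
            rw [Finset.card_filter]
          rw [this]
          have hset : (Finset.univ.filter fun x : α => p.1 ≠ x ∧ p.2 ≠ x)
              = Finset.univ \ {p.1, p.2} := by
            ext z
            simp [ne_comm, not_or, and_comm]
          rw [hset, Finset.card_sdiff_of_subset (Finset.subset_univ _), Finset.card_pair hne,
            Finset.card_univ]
        · simp [hp]
    _ = (Fintype.card α - 2) * adjCount G := by
        rw [adjCount_eq_filter, ← Finset.sum_filter, Finset.sum_const, smul_eq_mul, mul_comm]

lemma adjCount_lt {α β : Type} [Fintype α] [Fintype β] {G : SimpleGraph α}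
    {G' : SimpleGraph β} (f : α → β) (hinj : Function.Injective f)
    (hadj : ∀ a b : α, G.Adj a b → G'.Adj (f a) (f b))
    (x y : β) (hxy : G'.Adj x y)
    (hmiss : ∀ a b : α, G.Adj a b → (f a, f b) ≠ (x, y)) :
    adjCount G < adjCount G' := by
  classical
  rw [adjCount_eq_filter, adjCount_eq_filter]
  have himval : (Finset.univ.filter fun p : α × α => G.Adj p.1 p.2).image
      (fun p => (f p.1, f p.2)) ⊂ (Finset.univ.filter fun p : β × β => G'.Adj p.1 p.2) := by
    constructor
    · intro q hq
      simp only [Finset.mem_image, Finset.mem_filter, Finset.mem_univ, true_and] at hq ⊢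
      obtain ⟨p, hp, rfl⟩ := hq
      exact hadj _ _ hp
    · intro hsub
      have : (x, y) ∈ (Finset.univ.filter fun p : β × β => G'.Adj p.1 p.2) := by
        simp [hxy]
      have := hsub this
      simp only [Finset.mem_image, Finset.mem_filter, Finset.mem_univ, true_and] at this
      obtain ⟨p, hp, heq⟩ := this
      exact hmiss p.1 p.2 hp heq
  calc (Finset.univ.filter fun p : α × α => G.Adj p.1 p.2).card
      = ((Finset.univ.filter fun p : α × α => G.Adj p.1 p.2).image
          (fun p => (f p.1, f p.2))).card := by
        rw [Finset.card_image_of_injective]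
        intro p q h
        simp only [Prod.mk.injEq] at h
        exact Prod.ext (hinj h.1) (hinj h.2)
    _ < _ := Finset.card_lt_card himval

lemma adjCount_eq_of_hypo {α β : Type} [Fintype α] [Fintype β] {G : SimpleGraph α}
    {G' : SimpleGraph β} (hcard : 3 ≤ Fintype.card α) (σ : α ≃ β)
    (hc : ∀ x : α, Nonempty (G.induce ({x}ᶜ : Set α) ≃g G'.induce ({σ x}ᶜ : Set β))) :
    adjCount G = adjCount G' := by
  classical
  have h1 : ∑ x : α, adjCount (G.induce ({x}ᶜ : Set α))
      = ∑ x : α, adjCount (G'.induce ({σ x}ᶜ : Set β)) :=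
    Finset.sum_congr rfl fun x _ => adjCount_congr (hc x).some
  have h2 : ∑ x : α, adjCount (G'.induce ({σ x}ᶜ : Set β))
      = ∑ y : β, adjCount (G'.induce ({y}ᶜ : Set β)) :=
    Equiv.sum_comp σ (fun y => adjCount (G'.induce ({y}ᶜ : Set β)))
  have h3 := kelly_sum G
  have h4 := kelly_sum G'
  have hcc : Fintype.card β = Fintype.card α := (Fintype.card_congr σ).symm
  rw [h3, h2, h4, hcc] at h1
  exact Nat.eq_of_mul_eq_mul_left (by omega) h1

/-- If `S = V(G)∖{v,u}` is an anchor of `G` and `G[S]` is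
asymmetric (its only automorphism is the identity), then `G` is
reconstructible. -/
theorem stmt_5 {V : Type} [Fintype V] (G : SimpleGraph V)
    (hcard : 3 ≤ Fintype.card V) :
    (∃ (v u : V), v ≠ u ∧
      IsAnchor G (({v, u} : Set V)ᶜ) ∧
      (∀ α : G.induce (({v, u} : Set V)ᶜ) ≃g G.induce (({v, u} : Set V)ᶜ),
        ∀ x, α x = x)) →
    Reconstructible G := by
  classical
  rintro ⟨v, u, hvu, ⟨-, hanchor⟩, hasym⟩ W _ G' ⟨σ, hcards⟩
  set S : Set V := ({v, u} : Set V)ᶜ with hSdef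
  have hvS : v ∉ S := by simp [hSdef]
  have huS : u ∉ S := by simp [hSdef]
  have hnotS : ∀ x : V, x ∉ S → x = v ∨ x = u := by
    intro x hx
    by_cases h : x = v
    · exact Or.inl h
    · right
      by_contra h2
      exact hx (by simp [hSdef, h, h2])
  have hSv : S ⊆ ({v}ᶜ : Set V) := by
    intro s hs
    simp only [hSdef, Set.mem_compl_iff, Set.mem_insert_iff, Set.mem_singleton_iff,
      not_or] at hs ⊢
    exact hs.1
  have hSu : S ⊆ ({u}ᶜ : Set V) := by
    intro s hs
    simp only [hSdef, Set.mem_compl_iff, Set.mem_insert_iff, Set.mem_singleton_iff,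
      not_or] at hs ⊢
    exact hs.2
  let φ : ∀ x : V, G.induce ({x}ᶜ : Set V) ≃g G'.induce ({σ x}ᶜ : Set W) :=
    fun x => (hcards x).some
  -- every copy of G[S] in G' contains σ '' S
  have hC2 : ∀ T : Set W, Nonempty (G'.induce T ≃g G.induce S) → σ '' S ⊆ T := by
    intro T hT
    rintro - ⟨w, hw, rfl⟩
    by_contra hwT
    have hTsub : T ⊆ ({σ w}ᶜ : Set W) := by
      intro t ht
      simp only [Set.mem_compl_iff, Set.mem_singleton_iff]
      rintro rfl
      exact hwT ht
    have hiso := pushIso (φ w).symm T hTsub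
    have hne : Nonempty (G.induce (push (φ w).symm T) ≃g G.induce S) :=
      ⟨hiso.symm.trans hT.some⟩
    have heq := hanchor _ hne
    have hwin : w ∈ push (φ w).symm T := heq ▸ hw
    obtain ⟨y, -, hy⟩ := hwin
    exact y.2 hy
  -- the pushed copies equal σ '' S
  have hTviso : G.induce S ≃g G'.induce (push (φ v) S) := pushIso (φ v) S hSv
  have hTuiso : G.induce S ≃g G'.induce (push (φ u) S) := pushIso (φ u) S hSu
  have hTv : σ '' S = push (φ v) S :=
    Set.eq_of_subset_of_ncard_le (hC2 _ ⟨hTviso.symm⟩)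
      (le_of_eq (by rw [push_ncard (φ v) S hSv, Set.ncard_image_of_injective _ σ.injective]))
  have hTu : σ '' S = push (φ u) S :=
    Set.eq_of_subset_of_ncard_le (hC2 _ ⟨hTuiso.symm⟩)
      (le_of_eq (by rw [push_ncard (φ u) S hSu, Set.ncard_image_of_injective _ σ.injective]))
  have hu1 : u ∈ ({v}ᶜ : Set V) := by simpa using hvu.symm
  have hv1 : v ∈ ({u}ᶜ : Set V) := by simpa using hvu
  -- φ v sends u to σ u, φ u sends v to σ v
  have h_phi_u : ((φ v) ⟨u, hu1⟩).1 = σ u := by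
    have hc1 : ((φ v) ⟨u, hu1⟩).1 ≠ σ v := ((φ v) ⟨u, hu1⟩).2
    have hc2 : ((φ v) ⟨u, hu1⟩).1 ∉ σ '' S := by
      rw [hTv]
      rintro ⟨y, ⟨z, hz, rfl⟩, hval⟩
      have hz2 : z = ⟨u, hu1⟩ := (φ v).toEquiv.injective (Subtype.ext hval)
      rw [hz2] at hz
      exact huS hz
    obtain ⟨y, hy⟩ := σ.surjective ((φ v) ⟨u, hu1⟩).1
    have hyS : y ∉ S := fun hyS => hc2 ⟨y, hyS, hy⟩
    have hyv : y ≠ v := by rintro rfl; exact hc1 hy.symm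
    rcases hnotS y hyS with rfl | rfl
    · exact absurd rfl hyv
    · exact hy.symm
  have h_phi_v : ((φ u) ⟨v, hv1⟩).1 = σ v := by
    have hc1 : ((φ u) ⟨v, hv1⟩).1 ≠ σ u := ((φ u) ⟨v, hv1⟩).2
    have hc2 : ((φ u) ⟨v, hv1⟩).1 ∉ σ '' S := by
      rw [hTu]
      rintro ⟨y, ⟨z, hz, rfl⟩, hval⟩
      have hz2 : z = ⟨v, hv1⟩ := (φ u).toEquiv.injective (Subtype.ext hval)
      rw [hz2] at hz
      exact hvS hz
    obtain ⟨y, hy⟩ := σ.surjective ((φ u) ⟨v, hv1⟩).1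
    have hyS : y ∉ S := fun hyS => hc2 ⟨y, hyS, hy⟩
    have hyu : y ≠ u := by rintro rfl; exact hc1 hy.symm
    rcases hnotS y hyS with rfl | rfl
    · exact hy.symm
    · exact absurd rfl hyu
  -- the restricted maps
  let inclv : ↥S → ↥({v}ᶜ : Set V) := fun s => ⟨s.1, hSv s.2⟩
  let inclu : ↥S → ↥({u}ᶜ : Set V) := fun s => ⟨s.1, hSu s.2⟩
  let gv : ↥S → W := fun s => ((φ v) (inclv s)).1
  let gu : ↥S → W := fun s => ((φ u) (inclu s)).1
  have hgv_mem : ∀ s, gv s ∈ σ '' S := by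
    intro s
    rw [hTv]
    exact ⟨(φ v) (inclv s), ⟨inclv s, s.2, rfl⟩, rfl⟩
  have hgu_mem : ∀ s, gu s ∈ σ '' S := by
    intro s
    rw [hTu]
    exact ⟨(φ u) (inclu s), ⟨inclu s, s.2, rfl⟩, rfl⟩
  have hgv_inj : Function.Injective gv := by
    intro a b h
    have h2 := (φ v).toEquiv.injective (Subtype.ext h)
    exact Subtype.ext (congrArg (fun z : ↥({v}ᶜ : Set V) => z.1) h2)
  have hgu_inj : Function.Injective gu := by
    intro a b h
    have h2 := (φ u).toEquiv.injective (Subtype.ext h)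
    exact Subtype.ext (congrArg (fun z : ↥({u}ᶜ : Set V) => z.1) h2)
  have hgv_surj : ∀ t : ↥(σ '' S), ∃ s, gv s = t.1 := by
    rintro ⟨t, ht⟩
    rw [hTv] at ht
    obtain ⟨y, ⟨z, hz, rfl⟩, rfl⟩ := ht
    exact ⟨⟨z.1, hz⟩, rfl⟩
  have hgu_surj : ∀ t : ↥(σ '' S), ∃ s, gu s = t.1 := by
    rintro ⟨t, ht⟩
    rw [hTu] at ht
    obtain ⟨y, ⟨z, hz, rfl⟩, rfl⟩ := ht
    exact ⟨⟨z.1, hz⟩, rfl⟩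
  -- the two isomorphisms G[S] ≃ G'[σ '' S]
  have hbv : Function.Bijective (fun s : ↥S => (⟨gv s, hgv_mem s⟩ : ↥(σ '' S))) := by
    constructor
    · intro a b h
      exact hgv_inj (congrArg (fun t : ↥(σ '' S) => t.1) h)
    · intro t
      obtain ⟨s, hs⟩ := hgv_surj t
      exact ⟨s, Subtype.ext hs⟩
  have hbu : Function.Bijective (fun s : ↥S => (⟨gu s, hgu_mem s⟩ : ↥(σ '' S))) := by
    constructor
    · intro a b h
      exact hgu_inj (congrArg (fun t : ↥(σ '' S) => t.1) h)
    · intro t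
      obtain ⟨s, hs⟩ := hgu_surj t
      exact ⟨s, Subtype.ext hs⟩
  let αv : G.induce S ≃g G'.induce (σ '' S) :=
    { toEquiv := Equiv.ofBijective _ hbv
      map_rel_iff' := by
        intro a b
        simpa using (φ v).map_rel_iff (a := inclv a) (b := inclv b) }
  let αu : G.induce S ≃g G'.induce (σ '' S) :=
    { toEquiv := Equiv.ofBijective _ hbu
      map_rel_iff' := by
        intro a b
        simpa using (φ u).map_rel_iff (a := inclu a) (b := inclu b) }
  have hgveq : ∀ s : ↥S, gv s = gu s := by
    intro s
    have hβ := hasym (αv.trans αu.symm) s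
    have h2 : αu.symm (αv s) = s := hβ
    have h3 : αv s = αu s := by
      have := congrArg (⇑αu) h2
      simpa using this
    exact congrArg Subtype.val h3
  -- the candidate bijection
  let F : V → W := fun x => if h : x ∈ S then gv ⟨x, h⟩ else if x = v then σ v else σ u
  have hσvS : σ v ∉ σ '' S := by
    rintro ⟨y, hy, he⟩
    exact hvS (σ.injective he ▸ hy)
  have hσuS : σ u ∉ σ '' S := by
    rintro ⟨y, hy, he⟩
    exact huS (σ.injective he ▸ hy)
  have hFS : ∀ (x : V) (h : x ∈ S), F x = gv ⟨x, h⟩ := by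
    intro x h; simp [F, h]
  have hFv : F v = σ v := by simp [F, hvS]
  have hFu : F u = σ u := by simp [F, huS, hvu.symm]
  have hFinj : Function.Injective F := by
    intro a b hab
    by_cases ha : a ∈ S <;> by_cases hb : b ∈ S
    · rw [hFS a ha, hFS b hb] at hab
      exact congrArg Subtype.val (hgv_inj hab)
    · exfalso
      rw [hFS a ha] at hab
      rcases hnotS b hb with rfl | rfl
      · rw [hFv] at hab; exact hσvS (hab ▸ hgv_mem _)
      · rw [hFu] at hab; exact hσuS (hab ▸ hgv_mem _)
    · exfalso
      rw [hFS b hb] at hab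
      rcases hnotS a ha with rfl | rfl
      · rw [hFv] at hab; exact hσvS (hab ▸ hgv_mem _)
      · rw [hFu] at hab; exact hσuS (hab ▸ hgv_mem _)
    · rcases hnotS a ha with rfl | rfl <;> rcases hnotS b hb with rfl | rfl
      · rfl
      · rw [hFv, hFu] at hab; exact absurd (σ.injective hab) hvu
      · rw [hFv, hFu] at hab; exact absurd (σ.injective hab.symm) hvu
      · rfl
  have hFbij : Function.Bijective F :=
    (Fintype.bijective_iff_injective_and_card F).mpr ⟨hFinj, Fintype.card_congr σ⟩
  -- adjacency is preserved except possibly on the pair (v, u)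
  have hphiv_adj : ∀ (a b : V) (ha : a ∈ ({v}ᶜ : Set V)) (hb : b ∈ ({v}ᶜ : Set V)),
      G.Adj a b ↔ G'.Adj ((φ v) ⟨a, ha⟩).1 ((φ v) ⟨b, hb⟩).1 := by
    intro a b ha hb
    have := (φ v).map_rel_iff (a := ⟨a, ha⟩) (b := ⟨b, hb⟩)
    simpa using this.symm
  have hphiu_adj : ∀ (a b : V) (ha : a ∈ ({u}ᶜ : Set V)) (hb : b ∈ ({u}ᶜ : Set V)),
      G.Adj a b ↔ G'.Adj ((φ u) ⟨a, ha⟩).1 ((φ u) ⟨b, hb⟩).1 := by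
    intro a b ha hb
    have := (φ u).map_rel_iff (a := ⟨a, ha⟩) (b := ⟨b, hb⟩)
    simpa using this.symm
  have hone : ∀ a b : V, a ∈ S → (G.Adj a b ↔ G'.Adj (F a) (F b)) := by
    intro a b ha
    by_cases hb : b ∈ S
    · rw [hFS a ha, hFS b hb]
      exact hphiv_adj a b (hSv ha) (hSv hb)
    · rcases hnotS b hb with rfl | rfl
      · -- b = v : use the card at u
        rw [hFS a ha, hFv, hgveq ⟨a, ha⟩, ← h_phi_v]
        exact hphiu_adj a b (hSu ha) hv1
      · -- b = u : use the card at v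
        rw [hFS a ha, hFu, ← h_phi_u]
        exact hphiv_adj a b (hSv ha) hu1
  have hmain : ∀ a b : V, ¬(a = v ∧ b = u) → ¬(a = u ∧ b = v) →
      (G.Adj a b ↔ G'.Adj (F a) (F b)) := by
    intro a b h1 h2
    by_cases ha : a ∈ S
    · exact hone a b ha
    · by_cases hb : b ∈ S
      · rw [G.adj_comm, G'.adj_comm]
        exact hone b a hb
      · rcases hnotS a ha with rfl | rfl <;> rcases hnotS b hb with rfl | rfl
        · simp
        · exact absurd ⟨rfl, rfl⟩ h1
        · exact absurd ⟨rfl, rfl⟩ h2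
        · simp
  -- Kelly's counting argument for the remaining pair
  have hNG : adjCount G = adjCount G' := adjCount_eq_of_hypo hcard σ hcards
  let E : V ≃ W := Equiv.ofBijective F hFbij
  have hEF : ∀ x, E x = F x := fun x => rfl
  have hvu_adj : G.Adj v u ↔ G'.Adj (F v) (F u) := by
    by_cases h1 : G.Adj v u
    · by_cases h2 : G'.Adj (F v) (F u)
      · exact iff_of_true h1 h2
      · exfalso
        have hlt : adjCount G' < adjCount G := by
          apply adjCount_lt (⇑E.symm) E.symm.injective ?_ v u h1 ?_
          · intro a b hab
            by_cases hp : E.symm a = v ∧ E.symm b = u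
            · exfalso
              apply h2
              rw [← hEF, ← hEF, ← hp.1, ← hp.2, E.apply_symm_apply, E.apply_symm_apply]
              exact hab
            · by_cases hq : E.symm a = u ∧ E.symm b = v
              · exfalso
                apply h2
                rw [G'.adj_comm] at hab
                rw [← hEF, ← hEF, ← hq.1, ← hq.2, E.apply_symm_apply, E.apply_symm_apply]
                exact hab
              · refine (hmain _ _ hp hq).mpr ?_
                rw [← hEF, ← hEF, E.apply_symm_apply, E.apply_symm_apply]
                exact hab
          · intro a b hab heq
            apply h2
            injection heq with hha hhb
            have ha : a = F v := by
              rw [← hEF, ← hha, E.apply_symm_apply]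
            have hb : b = F u := by
              rw [← hEF, ← hhb, E.apply_symm_apply]
            rw [← ha, ← hb]
            exact hab
        omega
    · by_cases h2 : G'.Adj (F v) (F u)
      · exfalso
        have hlt : adjCount G < adjCount G' := by
          apply adjCount_lt F hFinj ?_ (F v) (F u) h2 ?_
          · intro a b hab
            by_cases hp : a = v ∧ b = u
            · exact absurd (hp.1 ▸ hp.2 ▸ hab) h1
            · by_cases hq : a = u ∧ b = v
              · rw [G.adj_comm] at hab
                exact absurd (hq.1 ▸ hq.2 ▸ hab) h1
              · exact (hmain a b hp hq).mp hab
          · intro a b hab heq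
            injection heq with hha hhb
            have ha := hFinj hha
            have hb := hFinj hhb
            exact h1 (ha ▸ hb ▸ hab)
        omega
      · exact iff_of_false h1 h2
  have hfull : ∀ a b : V, G.Adj a b ↔ G'.Adj (F a) (F b) := by
    intro a b
    by_cases hp : a = v ∧ b = u
    · rw [hp.1, hp.2]; exact hvu_adj
    · by_cases hq : a = u ∧ b = v
      · rw [hq.1, hq.2, G.adj_comm, G'.adj_comm]; exact hvu_adj
      · exact hmain a b hp hq
  exact ⟨⟨E, fun {a b} => (hfull a b).symm⟩⟩
end
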